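/- arXiv:2408.14705 — 2 statements merged into one kernel-verified Lean document; each statement's English description precedes it below -/
import Mathlib

section
/- For any finite set S of N points in the plane with at most N−2 collinear, writing t_m for the number of lines through exactly m points of S, assume Hirzebruch's inequality t₂ + t₃ ≥ N + Σ_{m≥5}(m−4)t_m. Then for any 2-coloring of S into n green and N−n red points (with N = 2n−k), the number of lines that are 1-equichromatic with at most six points is at least (6n − k(k+3))/4. -/
/-!
Count ordered pairs of points line by line: since two distinct points span exactly one
determined line, writing `gₗ, rₗ` for the numbers of green and red points on `l`,
`∑ₗ (gₗ + rₗ - (gₗ - rₗ)²) = N - k²`. Adding twice Hirzebruch's inequality, written as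
`N ≤ ∑ₗ w(gₗ + rₗ)`, gives `3N - k² ≤ ∑ₗ (2 w(gₗ + rₗ) + gₗ + rₗ - (gₗ - rₗ)²)`, and each summand
is at most `4` on a 1-equichromatic line with at most six points and at most `0` on any other line.
-/

open scoped Classical

/-- The finite set of lines determined by a finite point set `P` in the complex plane. -/
noncomputable def detLines (P : Finset (ℂ × ℂ)) : Finset (AffineSubspace ℂ (ℂ × ℂ)) :=
  ((P ×ˢ P).filter fun pq => pq.1 ≠ pq.2).image fun pq => affineSpan ℂ {pq.1, pq.2}

open Finset

section Lines

variable {P : Finset (ℂ × ℂ)}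

lemma affineSpan_pair_mem_detLines {p q : ℂ × ℂ} (hp : p ∈ P) (hq : q ∈ P) (hpq : p ≠ q) :
    line[ℂ, p, q] ∈ detLines P :=
  mem_image.mpr ⟨(p, q), by simp [hp, hq, hpq], rfl⟩

lemma affineSpan_pair_eq_of_mem_detLines {l : AffineSubspace ℂ (ℂ × ℂ)} (hl : l ∈ detLines P)
    {p q : ℂ × ℂ} (hp : p ∈ l) (hq : q ∈ l) (hpq : p ≠ q) : line[ℂ, p, q] = l := by
  obtain ⟨_, -, rfl⟩ := mem_image.mp hl
  exact affineSpan_pair_eq_of_mem_of_mem_of_ne hp hq hpq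

lemma two_le_card_filter_mem_of_mem_detLines {l : AffineSubspace ℂ (ℂ × ℂ)}
    (hl : l ∈ detLines P) : 2 ≤ #(P.filter (· ∈ l)) := by
  obtain ⟨⟨p, q⟩, hpq, rfl⟩ := mem_image.mp hl
  simp only [mem_filter, mem_product] at hpq
  exact one_lt_card.mpr ⟨p, mem_filter.mpr ⟨hpq.1.1, left_mem_affineSpan_pair ℂ p q⟩,
    q, mem_filter.mpr ⟨hpq.1.2, right_mem_affineSpan_pair ℂ p q⟩, hpq.2⟩

lemma card_eq_sum_detLines_card_filter (s : Finset ((ℂ × ℂ) × (ℂ × ℂ)))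
    (hs : ∀ pq ∈ s, pq.1 ∈ P ∧ pq.2 ∈ P ∧ pq.1 ≠ pq.2) :
    #s = ∑ l ∈ detLines P, #(s.filter fun pq => pq.1 ∈ l ∧ pq.2 ∈ l) := by
  rw [card_eq_sum_card_fiberwise fun pq hpq =>
    affineSpan_pair_mem_detLines (hs pq hpq).1 (hs pq hpq).2.1 (hs pq hpq).2.2]
  refine sum_congr rfl fun l hl => congrArg card <| filter_congr fun pq hpq => ?_
  constructor
  · rintro rfl
    exact ⟨left_mem_affineSpan_pair ℂ _ _, right_mem_affineSpan_pair ℂ _ _⟩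
  · rintro ⟨h₁, h₂⟩
    exact affineSpan_pair_eq_of_mem_detLines hl h₁ h₂ (hs pq hpq).2.2

lemma card_offDiag_eq_sum_detLines {G : Finset (ℂ × ℂ)} (hG : G ⊆ P) :
    #G.offDiag = ∑ l ∈ detLines P, #(G.filter (· ∈ l)).offDiag := by
  rw [card_eq_sum_detLines_card_filter G.offDiag fun pq hpq => by
    obtain ⟨h₁, h₂, hne⟩ := mem_offDiag.mp hpq
    exact ⟨hG h₁, hG h₂, hne⟩]
  refine sum_congr rfl fun l _ => congrArg card ?_
  ext
  simp only [mem_filter, mem_offDiag]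
  tauto

lemma card_mul_card_eq_sum_detLines {G R : Finset (ℂ × ℂ)} (hG : G ⊆ P) (hR : R ⊆ P)
    (hGR : Disjoint G R) :
    #G * #R = ∑ l ∈ detLines P, #(G.filter (· ∈ l)) * #(R.filter (· ∈ l)) := by
  rw [← card_product, card_eq_sum_detLines_card_filter (G ×ˢ R) fun pq hpq => by
    obtain ⟨h₁, h₂⟩ := mem_product.mp hpq
    exact ⟨hG h₁, hR h₂, disjoint_left.mp hGR h₁ ∘ (· ▸ h₂)⟩]
  simp only [← card_product, filter_product]

lemma natCast_card_offDiag {α : Type*} (s : Finset α) :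
    (#s.offDiag : ℤ) = #s * #s - #s := by
  rw [offDiag_card, Nat.cast_sub (Nat.le_mul_self _), Nat.cast_mul]

lemma sum_detLines_sub_sq {G R : Finset (ℂ × ℂ)} (hG : G ⊆ P) (hR : R ⊆ P)
    (hGR : Disjoint G R) :
    ∑ l ∈ detLines P, ((#(G.filter (· ∈ l)) + #(R.filter (· ∈ l)) : ℤ)
        - (#(G.filter (· ∈ l)) - #(R.filter (· ∈ l)) : ℤ) ^ 2)
      = (#G + #R : ℤ) - (#G - #R : ℤ) ^ 2 := by
  have hGG := congrArg (Nat.cast : ℕ → ℤ) (card_offDiag_eq_sum_detLines hG)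
  have hRR := congrArg (Nat.cast : ℕ → ℤ) (card_offDiag_eq_sum_detLines hR)
  have hGxR := congrArg (Nat.cast : ℕ → ℤ) (card_mul_card_eq_sum_detLines hG hR hGR)
  simp only [Nat.cast_sum, Nat.cast_mul, natCast_card_offDiag] at hGG hRR hGxR
  have hexpand : ∀ a b : ℤ, a + b - (a - b) ^ 2 = 2 * (a * b) - (a * a - a) - (b * b - b) :=
    fun a b => by ring
  simp only [hexpand, sum_sub_distrib, ← mul_sum, ← hGG, ← hRR, ← hGxR]

end Lines

/-- Hirzebruch's inequality `t₂ + t₃ ≥ N + ∑_{m ≥ 5} (m - 4) tₘ` reads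
`N ≤ ∑ₗ hirzebruchWeight |S ∩ l|`. -/
def hirzebruchWeight (m : ℕ) : ℤ :=
  if m = 2 ∨ m = 3 then 1 else if 5 ≤ m then 4 - m else 0

lemma sum_hirzebruchWeight {ι : Type*} (L : Finset ι) (c : ι → ℕ) :
    ∑ l ∈ L, hirzebruchWeight (c l)
      = #(L.filter (c · = 2)) + #(L.filter (c · = 3))
        - ∑ l ∈ L, if 5 ≤ c l then (c l : ℤ) - 4 else 0 := by
  simp only [card_filter, Nat.cast_sum, ← sum_add_distrib, ← sum_sub_distrib]
  refine sum_congr rfl fun l _ => ?_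
  unfold hirzebruchWeight
  split_ifs <;> omega

lemma two_mul_hirzebruchWeight_add_le {i j : ℕ} (h : 2 ≤ i + j) :
    2 * hirzebruchWeight (i + j) + ((i + j : ℤ) - (i - j : ℤ) ^ 2)
      ≤ 4 * if 1 ≤ i ∧ 1 ≤ j ∧ i ≤ j + 1 ∧ j ≤ i + 1 ∧ i + j ≤ 6 then 1 else 0 := by
  by_cases h6 : i + j ≤ 6
  · have hi : i ≤ 6 := by omega
    have hj : j ≤ 6 := by omega
    interval_cases i <;> interval_cases j <;> simp_all [hirzebruchWeight]
  · have hw : hirzebruchWeight (i + j) = 4 - (i + j : ℤ) := by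
      rw [hirzebruchWeight, if_neg (by omega), if_pos (by omega), Nat.cast_add]
    rw [hw, if_neg (by omega)]
    -- `8 - (i + j) - (i - j)² ≤ 0` since `i + j ≥ 7`, with equality to `7` only when `i ≠ j`
    rcases eq_or_ne i j with rfl | hij
    · rw [sub_self, zero_pow two_ne_zero]
      omega
    · have : 0 < ((i : ℤ) - j) ^ 2 := sq_pos_of_ne_zero (sub_ne_zero.mpr (by exact_mod_cast hij))
      omega

theorem le_four_mul_card_filter_equichromatic {G R : Finset (ℂ × ℂ)} (hGR : Disjoint G R)
    (hHir : (#G + #R : ℤ)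
      ≤ ∑ l ∈ detLines (G ∪ R), hirzebruchWeight #((G ∪ R).filter (· ∈ l))) :
    3 * (#G + #R : ℤ) - (#G - #R : ℤ) ^ 2
      ≤ 4 * #((detLines (G ∪ R)).filter fun l =>
        1 ≤ #(G.filter (· ∈ l)) ∧ 1 ≤ #(R.filter (· ∈ l))
        ∧ #(G.filter (· ∈ l)) ≤ #(R.filter (· ∈ l)) + 1
        ∧ #(R.filter (· ∈ l)) ≤ #(G.filter (· ∈ l)) + 1
        ∧ #(G.filter (· ∈ l)) + #(R.filter (· ∈ l)) ≤ 6) := by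
  have hsplit (l : AffineSubspace ℂ (ℂ × ℂ)) :
      #((G ∪ R).filter (· ∈ l)) = #(G.filter (· ∈ l)) + #(R.filter (· ∈ l)) := by
    rw [filter_union, card_union_of_disjoint (disjoint_filter_filter hGR)]
  simp only [hsplit] at hHir
  rw [natCast_card_filter, mul_sum]
  refine le_trans ?_ <| sum_le_sum fun l hl => two_mul_hirzebruchWeight_add_le <|
    hsplit l ▸ two_le_card_filter_mem_of_mem_detLines hl
  rw [sum_add_distrib, ← mul_sum, sum_detLines_sub_sq subset_union_left subset_union_right hGR]
  linarith

theorem stmt_12_general (N n k : ℕ) (hk : k ≤ n) (hN : N = 2 * n - k)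
    (S G R : Finset (ℂ × ℂ)) (hS : S = G ∪ R) (hGR : Disjoint G R)
    (hG : G.card = n) (hR : R.card = n - k)
    (hHir : (((detLines S).filter (fun l => (S.filter (fun p => p ∈ l)).card = 2)).card : ℤ)
          + (((detLines S).filter (fun l => (S.filter (fun p => p ∈ l)).card = 3)).card : ℤ)
        ≥ (N : ℤ) + ∑ l ∈ detLines S,
            (if 5 ≤ (S.filter (fun p => p ∈ l)).card
              then ((S.filter (fun p => p ∈ l)).card : ℤ) - 4 else 0)) :
    (((detLines S).filter (fun l =>
        1 ≤ (G.filter (fun p => p ∈ l)).card ∧ 1 ≤ (R.filter (fun p => p ∈ l)).card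
        ∧ (G.filter (fun p => p ∈ l)).card ≤ (R.filter (fun p => p ∈ l)).card + 1
        ∧ (R.filter (fun p => p ∈ l)).card ≤ (G.filter (fun p => p ∈ l)).card + 1
        ∧ (G.filter (fun p => p ∈ l)).card + (R.filter (fun p => p ∈ l)).card ≤ 6)).card : ℚ)
      ≥ (6 * (n : ℚ) - (k : ℚ) * (k + 3)) / 4 := by
  subst hS
  have hcard : #G + #R = N := by omega
  have hdiff : (#G - #R : ℤ) = k := by omega
  have key := le_four_mul_card_filter_equichromatic hGR <| by
    rw [← Nat.cast_add, hcard, sum_hirzebruchWeight]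
    linarith
  rw [← Nat.cast_add, hcard, hdiff] at key
  have hNq : (N : ℚ) = 2 * n - k := by
    rw [hN, Nat.cast_sub (by omega)]
    push_cast
    ring
  have keyq := (Int.cast_le (R := ℚ)).mpr key
  push_cast at keyq
  rw [ge_iff_le, div_le_iff₀ four_pos]
  linarith

/-- Theorem 6 of the paper: let `S` be a set of `N = 2n - k` points in `ℂ²` with at most
`N - 2` collinear, satisfying Hirzebruch's inequality `t₂ + t₃ ≥ N + Σ_{m≥5}(m-4)tₘ`.
Then for any 2-coloring of `S` into `n` green and `n - k` red points, the number of
1-equichromatic lines through at most six points is at least `(6n - k(k+3))/4`. -/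
theorem stmt_12 (N n k : ℕ) (hk : k ≤ n) (hN : N = 2 * n - k)
    (S G R : Finset (ℂ × ℂ)) (hS : S = G ∪ R) (hGR : Disjoint G R)
    (hG : G.card = n) (hR : R.card = n - k)
    (hcol : ∀ T : Finset (ℂ × ℂ), T ⊆ S → Collinear ℂ (T : Set (ℂ × ℂ)) →
      (T.card : ℤ) ≤ (N : ℤ) - 2)
    (hHir : (((detLines S).filter (fun l => (S.filter (fun p => p ∈ l)).card = 2)).card : ℤ)
          + (((detLines S).filter (fun l => (S.filter (fun p => p ∈ l)).card = 3)).card : ℤ)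
        ≥ (N : ℤ) + ∑ l ∈ detLines S,
            (if 5 ≤ (S.filter (fun p => p ∈ l)).card
              then ((S.filter (fun p => p ∈ l)).card : ℤ) - 4 else 0)) :
    (((detLines S).filter (fun l =>
        1 ≤ (G.filter (fun p => p ∈ l)).card ∧ 1 ≤ (R.filter (fun p => p ∈ l)).card
        ∧ (G.filter (fun p => p ∈ l)).card ≤ (R.filter (fun p => p ∈ l)).card + 1
        ∧ (R.filter (fun p => p ∈ l)).card ≤ (G.filter (fun p => p ∈ l)).card + 1
        ∧ (G.filter (fun p => p ∈ l)).card + (R.filter (fun p => p ∈ l)).card ≤ 6)).card : ℚ)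
      ≥ (6 * (n : ℚ) - (k : ℚ) * (k + 3)) / 4 :=
  stmt_12_general N n k hk hN S G R hS hGR hG hR hHir
end

section
/- For any finite set S of N points in ℂ² with at most (2/3)N collinear, writing t_m for the number of lines through exactly m points, assume the Bojanowski–Pokora inequality Σ_{m≥2}(4m − m²)t_m ≥ 4N. Then for any 2-coloring of S into n green and n−k red points (N = 2n−k), the number of 2-equichromatic lines through at most four points is at least (10n − k(k+5))/6. -/
open scoped Classical

/-!
Give a line with `g` green and `r` red points, `m = g + r`, the weight `5m - m² - (g - r)²`.
It is at most `6` on the 2-equichromatic lines through at most four points and at most `0`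
on every other line. The total weight is `∑ (4m - m²) - ∑ ((g - r)² - m)`; since every pair
of distinct points spans exactly one line, counting green–green, red–red and green–red pairs
gives `∑ ((g - r)² - m) = (#G - #R)² - N = k² - N`. With the Bojanowski–Pokora inequality
the total weight is at least `5N - k² = 10n - k(k + 5)`.
-/

open Finset

lemma affineSpan_pair_eq_iff_of_mem_detLines {S : Finset (ℂ × ℂ)} {l : AffineSubspace ℂ (ℂ × ℂ)}
    (hl : l ∈ detLines S) {p q : ℂ × ℂ} (hpq : p ≠ q) :
    affineSpan ℂ {p, q} = l ↔ p ∈ l ∧ q ∈ l := by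
  obtain ⟨⟨a, b⟩, -, rfl⟩ := mem_image.1 hl
  refine ⟨fun h => ?_, fun h => affineSpan_pair_eq_of_mem_of_mem_of_ne h.1 h.2 hpq⟩
  rw [← h]
  exact ⟨left_mem_affineSpan_pair .., right_mem_affineSpan_pair ..⟩

lemma sum_detLines_card_filter_mem {S : Finset (ℂ × ℂ)} {P : Finset ((ℂ × ℂ) × (ℂ × ℂ))}
    (hP : ∀ pq ∈ P, pq.1 ∈ S ∧ pq.2 ∈ S ∧ pq.1 ≠ pq.2) :
    ∑ l ∈ detLines S, #{pq ∈ P | pq.1 ∈ l ∧ pq.2 ∈ l} = #P := by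
  have hmaps : (P : Set ((ℂ × ℂ) × (ℂ × ℂ))).MapsTo (fun pq => affineSpan ℂ {pq.1, pq.2})
      (detLines S) := fun pq hpq => by
    obtain ⟨hp, hq, hpq⟩ := hP pq hpq
    exact mem_image.2 ⟨pq, mem_filter.2 ⟨mem_product.2 ⟨hp, hq⟩, hpq⟩, rfl⟩
  rw [card_eq_sum_card_fiberwise hmaps]
  exact sum_congr rfl fun l hl => congrArg card <| filter_congr fun pq hpq =>
    (affineSpan_pair_eq_iff_of_mem_detLines hl (hP pq hpq).2.2).symm

lemma sum_detLines_card_mul_card {S A B : Finset (ℂ × ℂ)} (hA : A ⊆ S) (hB : B ⊆ S)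
    (hAB : Disjoint A B) :
    ∑ l ∈ detLines S, #{p ∈ A | p ∈ l} * #{p ∈ B | p ∈ l} = #A * #B := by
  rw [← card_product, ← sum_detLines_card_filter_mem (S := S) fun pq hpq => ?_]
  · simp only [← card_product, filter_product]
  · obtain ⟨ha, hb⟩ := mem_product.1 hpq
    exact ⟨hA ha, hB hb, fun h => disjoint_left.1 hAB ha (h ▸ hb)⟩

lemma sum_detLines_card_offDiag {S A : Finset (ℂ × ℂ)} (hA : A ⊆ S) :
    ∑ l ∈ detLines S, #{p ∈ A | p ∈ l}.offDiag = #A.offDiag := by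
  rw [← sum_detLines_card_filter_mem (S := S) fun pq hpq => ?_]
  · refine sum_congr rfl fun l _ => congrArg card ?_
    ext pq
    simp only [mem_offDiag, mem_filter]
    tauto
  · obtain ⟨h1, h2, h3⟩ := mem_offDiag.1 hpq
    exact ⟨hA h1, hA h2, h3⟩

lemma sum_detLines_sq_sub_card_add_card {S G R : Finset (ℂ × ℂ)} (hG : G ⊆ S) (hR : R ⊆ S)
    (hGR : Disjoint G R) :
    ∑ l ∈ detLines S, ((((#{p ∈ G | p ∈ l} : ℤ) - #{p ∈ R | p ∈ l}) ^ 2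
        - (#{p ∈ G | p ∈ l} + #{p ∈ R | p ∈ l})))
      = ((#G : ℤ) - #R) ^ 2 - (#G + #R) := by
  have hoff (s : Finset (ℂ × ℂ)) : (#s.offDiag : ℤ) = (#s : ℤ) ^ 2 - #s := by
    rw [offDiag_card, Nat.cast_sub (Nat.le_mul_self _)]
    push_cast
    ring
  have hGG := congrArg (Nat.cast : ℕ → ℤ) (sum_detLines_card_offDiag (S := S) hG)
  have hRR := congrArg (Nat.cast : ℕ → ℤ) (sum_detLines_card_offDiag (S := S) hR)
  have hGR' := congrArg (Nat.cast : ℕ → ℤ) (sum_detLines_card_mul_card hG hR hGR)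
  push_cast [hoff] at hGG hRR hGR'
  calc _ = ∑ l ∈ detLines S, ((#{p ∈ G | p ∈ l} : ℤ) ^ 2 - #{p ∈ G | p ∈ l})
        + ∑ l ∈ detLines S, ((#{p ∈ R | p ∈ l} : ℤ) ^ 2 - #{p ∈ R | p ∈ l})
        - 2 * ∑ l ∈ detLines S, (#{p ∈ G | p ∈ l} : ℤ) * #{p ∈ R | p ∈ l} := by
        rw [mul_sum, ← sum_add_distrib, ← sum_sub_distrib]
        exact sum_congr rfl fun _ _ => by ring
    _ = _ := by rw [hGG, hRR, hGR']; ring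

/-- The left side is `5m - m² - d²` with `m = g + r`, `d = g - r`. Now `5m - m² ≤ 6` for every
integer `m`, `5m - m² ≤ 0` once `m ≥ 5`, and `d² ≥ 9` outweighs the `6`. -/
lemma four_mul_sub_sq_sub_le (g r : ℕ) :
    4 * ((g : ℤ) + r) - ((g : ℤ) + r) ^ 2 - (((g : ℤ) - r) ^ 2 - ((g : ℤ) + r))
      ≤ if g ≤ r + 2 ∧ r ≤ g + 2 ∧ g + r ≤ 4 then 6 else 0 := by
  have hm : (g : ℤ) + r ≤ 2 ∨ 3 ≤ (g : ℤ) + r := by omega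
  split_ifs with h
  · rcases hm with hm | hm <;> nlinarith
  · have h' : (3 : ℤ) + r ≤ g ∨ (3 : ℤ) + g ≤ r ∨ (5 : ℤ) ≤ g + r := by omega
    rcases h' with h' | h' | h' <;> rcases hm with hm | hm <;> nlinarith

theorem stmt_13_general (N n k : ℕ) (hk : k ≤ n) (hN : N = 2 * n - k)
    (S G R : Finset (ℂ × ℂ)) (hS : S = G ∪ R) (hGR : Disjoint G R)
    (hG : G.card = n) (hR : R.card = n - k)
    (hBP : ∑ l ∈ detLines S,
        (4 * ((S.filter (fun p => p ∈ l)).card : ℤ)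
          - ((S.filter (fun p => p ∈ l)).card : ℤ) ^ 2)
      ≥ 4 * (N : ℤ)) :
    (((detLines S).filter (fun l =>
        (G.filter (fun p => p ∈ l)).card ≤ (R.filter (fun p => p ∈ l)).card + 2
        ∧ (R.filter (fun p => p ∈ l)).card ≤ (G.filter (fun p => p ∈ l)).card + 2
        ∧ (G.filter (fun p => p ∈ l)).card + (R.filter (fun p => p ∈ l)).card ≤ 4)).card : ℚ)
      ≥ (10 * (n : ℚ) - (k : ℚ) * (k + 5)) / 6 := by
  have hSl (l : AffineSubspace ℂ (ℂ × ℂ)) :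
      #{p ∈ S | p ∈ l} = #{p ∈ G | p ∈ l} + #{p ∈ R | p ∈ l} := by
    rw [hS, filter_union, card_union_of_disjoint (disjoint_filter_filter hGR)]
  simp only [hSl, Nat.cast_add] at hBP
  have hpairs :=
    sum_detLines_sq_sub_card_add_card (hS ▸ subset_union_left) (hS ▸ subset_union_right) hGR
  rw [hG, hR, Nat.cast_sub hk] at hpairs
  have hlines := sum_le_sum fun l (_ : l ∈ detLines S) =>
    four_mul_sub_sq_sub_le #{p ∈ G | p ∈ l} #{p ∈ R | p ∈ l}
  rw [sum_sub_distrib, ← sum_filter, sum_const, nsmul_eq_mul] at hlines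
  have hNZ : (N : ℤ) = 2 * n - k := by omega
  rw [ge_iff_le, div_le_iff₀ (by norm_num)]
  exact_mod_cast (show 10 * (n : ℤ) - k * (k + 5) ≤ _ by push_cast; linarith)

/-- Theorem 7 of the paper: let `S` be a set of `N = 2n - k` points in `ℂ²` with at most
`(2/3)N` collinear, satisfying the Bojanowski–Pokora inequality
`Σ_{m≥2}(4m - m²)tₘ ≥ 4N`. Then for any 2-coloring of `S` into `n` green and `n - k`
red points, the number of 2-equichromatic lines through at most four points is at least
`(10n - k(k+5))/6`. -/
theorem stmt_13 (N n k : ℕ) (hk : k ≤ n) (hN : N = 2 * n - k)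
    (S G R : Finset (ℂ × ℂ)) (hS : S = G ∪ R) (hGR : Disjoint G R)
    (hG : G.card = n) (hR : R.card = n - k)
    (hcol : ∀ T : Finset (ℂ × ℂ), T ⊆ S → Collinear ℂ (T : Set (ℂ × ℂ)) →
      3 * T.card ≤ 2 * N)
    (hBP : ∑ l ∈ detLines S,
        (4 * ((S.filter (fun p => p ∈ l)).card : ℤ)
          - ((S.filter (fun p => p ∈ l)).card : ℤ) ^ 2)
      ≥ 4 * (N : ℤ)) :
    (((detLines S).filter (fun l =>
        (G.filter (fun p => p ∈ l)).card ≤ (R.filter (fun p => p ∈ l)).card + 2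
        ∧ (R.filter (fun p => p ∈ l)).card ≤ (G.filter (fun p => p ∈ l)).card + 2
        ∧ (G.filter (fun p => p ∈ l)).card + (R.filter (fun p => p ∈ l)).card ≤ 4)).card : ℚ)
      ≥ (10 * (n : ℚ) - (k : ℚ) * (k + 5)) / 6 :=
  stmt_13_general N n k hk hN S G R hS hGR hG hR hBP
end
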